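/- arXiv:1912.00979 — 6 statements merged into one kernel-verified Lean document; each statement's English description precedes it below -/
import Mathlib

section
/- Let r : ℝ^d → ℝ and s : ℝ^d × ℝ^d → ℝ be measurable functions with r(ω) ≥ 0 for all ω and s(ω, z1)·s(ω, z2) ≥ 0 for all (ω, z1, z2). Let n ∈ ℕ, let z_1, …, z_n ∈ ℝ^d, and let c_1, …, c_n ∈ ℝ, and assume that for each i the function ω ↦ r(ω)·s(ω, z_i)² is Lebesgue-integrable on ℝ^d. Define the data-dependent kernel κ(z_i, z_k) = ∫_{ℝ^d} r(ω)·s(ω, z_i)·s(ω, z_k)·cos(⟨ω, z_i − z_k⟩) dω. Then ∑_{i=1}^n ∑_{k=1}^n c_i·c_k·κ(z_i, z_k) ≥ 0. -/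
open MeasureTheory Real Finset
open scoped RealInnerProductSpace

/-- Positive (semi)definiteness of the data-dependent kernel
`κ(z₁, z₂) = ∫ r(ω)·s(ω,z₁)·s(ω,z₂)·cos(⟨ω, z₁ − z₂⟩) dω` (paper's Theorem 2). -/
theorem stmt_2 {d : ℕ} (r : EuclideanSpace ℝ (Fin d) → ℝ)
    (s : EuclideanSpace ℝ (Fin d) → EuclideanSpace ℝ (Fin d) → ℝ)
    (hr_meas : Measurable r) (hs_meas : Measurable (Function.uncurry s))
    (hr_nonneg : ∀ ω, 0 ≤ r ω)
    (hs_nonneg : ∀ ω z1 z2, 0 ≤ s ω z1 * s ω z2)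
    (n : ℕ) (z : Fin n → EuclideanSpace ℝ (Fin d)) (c : Fin n → ℝ)
    (hint : ∀ i, Integrable (fun ω => r ω * (s ω (z i)) ^ 2)) :
    0 ≤ ∑ i, ∑ k, c i * c k *
        ∫ ω, r ω * s ω (z i) * s ω (z k) * Real.cos ⟪ω, z i - z k⟫ := by
  set F : Fin n → Fin n → EuclideanSpace ℝ (Fin d) → ℝ :=
    fun i k ω => r ω * s ω (z i) * s ω (z k) * Real.cos ⟪ω, z i - z k⟫ with hF
  have hs' : ∀ a, Measurable fun ω => s ω a := fun a =>
    hs_meas.comp (measurable_id.prodMk measurable_const)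
  have hmeasF : ∀ i k, Measurable (F i k) := by
    intro i k
    have hc : Measurable fun ω : EuclideanSpace ℝ (Fin d) =>
        Real.cos ⟪ω, z i - z k⟫ :=
      Real.continuous_cos.measurable.comp
        ((continuous_id.inner continuous_const).measurable)
    exact ((hr_meas.mul (hs' _)).mul (hs' _)).mul hc
  have hintF : ∀ i k, Integrable (F i k) := by
    intro i k
    refine ((hint i).add (hint k)).mono' (hmeasF i k).aestronglyMeasurable
      (Filter.Eventually.of_forall fun ω => ?_)
    have h1 : |Real.cos ⟪ω, z i - z k⟫| ≤ 1 := Real.abs_cos_le_one _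
    have h2 := hs_nonneg ω (z i) (z k)
    have h3 := hr_nonneg ω
    rw [Real.norm_eq_abs, hF]
    simp only
    rw [abs_mul]
    calc |r ω * s ω (z i) * s ω (z k)| * |Real.cos ⟪ω, z i - z k⟫|
        ≤ |r ω * s ω (z i) * s ω (z k)| * 1 :=
          mul_le_mul_of_nonneg_left h1 (abs_nonneg _)
      _ = r ω * (s ω (z i) * s ω (z k)) := by
          rw [mul_one, mul_assoc, abs_of_nonneg (mul_nonneg h3 h2)]
      _ ≤ r ω * s ω (z i) ^ 2 + r ω * s ω (z k) ^ 2 := by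
          nlinarith [sq_nonneg (s ω (z i) - s ω (z k)), sq_nonneg (s ω (z i) + s ω (z k))]
  have hintcF : ∀ i k, Integrable (fun ω => c i * c k * F i k ω) :=
    fun i k => (hintF i k).const_mul _
  have hswap : ∑ i, ∑ k, c i * c k * ∫ ω, F i k ω
      = ∫ ω, ∑ i, ∑ k, c i * c k * F i k ω := by
    rw [integral_finset_sum _ (fun i _ => integrable_finset_sum _ (fun k _ => hintcF i k))]
    refine Finset.sum_congr rfl fun i _ => ?_
    rw [integral_finset_sum _ (fun k _ => hintcF i k)]
    refine Finset.sum_congr rfl fun k _ => ?_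
    simp_rw [← smul_eq_mul, integral_smul]
  rw [hswap]
  refine integral_nonneg fun ω => ?_
  set g : Fin n → ℝ := fun i => c i * (Real.sqrt (r ω) * |s ω (z i)|) with hg
  have key : ∑ i, ∑ k, c i * c k * F i k ω
      = (∑ i, g i * Real.cos ⟪ω, z i⟫) ^ 2 + (∑ i, g i * Real.sin ⟪ω, z i⟫) ^ 2 := by
    rw [sq, sq, Finset.sum_mul_sum, Finset.sum_mul_sum, ← Finset.sum_add_distrib]
    refine Finset.sum_congr rfl fun i _ => ?_
    rw [← Finset.sum_add_distrib]
    refine Finset.sum_congr rfl fun k _ => ?_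
    have habs : s ω (z i) * s ω (z k) = |s ω (z i)| * |s ω (z k)| := by
      rw [← abs_mul, abs_of_nonneg (hs_nonneg ω (z i) (z k))]
    have hsq : Real.sqrt (r ω) * Real.sqrt (r ω) = r ω :=
      Real.mul_self_sqrt (hr_nonneg ω)
    have hinner : ⟪ω, z i - z k⟫ = ⟪ω, z i⟫ - ⟪ω, z k⟫ := inner_sub_right _ _ _
    simp only [hF, hg, hinner, Real.cos_sub]
    rw [show r ω * s ω (z i) * s ω (z k)
        = (Real.sqrt (r ω) * |s ω (z i)|) * (Real.sqrt (r ω) * |s ω (z k)|) by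
      rw [mul_assoc, habs]; linear_combination (-(|s ω (z i)| * |s ω (z k)|)) * hsq]
    ring
  rw [key]
  positivity
end

section
/- Let μ be a probability measure on ℝ^d with ∫_{ℝ^d} ‖ω‖² dμ(ω) < ∞, let t¹, t² : ℝ^d → ℝ^d be continuously differentiable, and let h : ℝ^D → ℝ^d be Lipschitz continuous. Define the kernel k(x, y) = ∫_{ℝ^d} cos(⟨ω, h(x) − h(y)⟩) dμ(ω) + E_{ε}[ cos(⟨ t¹(h(x)) + t¹(h(y)) + ε ⊙ exp(t²(h(x)) + t²(h(y))), h(x) − h(y)⟩) ], where ε is uniformly distributed on [−1, 1]^d, ⊙ is coordinatewise multiplication, and exp is applied coordinatewise. If (Q_n) is a sequence of probability measures on ℝ^D converging weakly (in distribution) to a probability measure P, then MMD²_k(Q_n, P) → 0 as n → ∞. -/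
open MeasureTheory Real Filter
open scoped RealInnerProductSpace ENNReal Topology


open Metric
open scoped BoundedContinuousFunction
set_option linter.unusedSectionVars false
set_option linter.unusedVariables false
set_option maxHeartbeats 1000000

section Trunc
variable {α : Type*} [MeasurableSpace α] [MetricSpace α] [OpensMeasurableSpace α]

noncomputable def trunc (o : α) (m : ℕ) (x : α) : ℝ := min 1 (max (dist x o - m) 0)

lemma trunc_cont (o : α) (m : ℕ) : Continuous (trunc o m) :=
  continuous_const.min (((continuous_id.dist continuous_const).sub continuous_const).max
    continuous_const)

lemma trunc_nonneg (o : α) (m : ℕ) (x : α) : 0 ≤ trunc o m x :=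
  le_min zero_le_one (le_max_right _ _)

lemma trunc_le_one (o : α) (m : ℕ) (x : α) : trunc o m x ≤ 1 := min_le_left _ _

lemma trunc_eq_one {o : α} {m : ℕ} {x : α} (h : (m : ℝ) + 1 ≤ dist x o) :
    trunc o m x = 1 := by
  have : (1 : ℝ) ≤ dist x o - m := by linarith
  simp [trunc, min_eq_left, le_max_of_le_left this]

lemma trunc_anti (o : α) (x : α) : Antitone fun m : ℕ => trunc o m x := by
  intro m m' hmm'
  have : dist x o - m' ≤ dist x o - m := by
    have : (m : ℝ) ≤ m' := by exact_mod_cast hmm'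
    linarith
  exact min_le_min le_rfl (max_le_max this le_rfl)

lemma trunc_tendsto (o : α) (x : α) :
    Tendsto (fun m : ℕ => trunc o m x) atTop (𝓝 0) := by
  have : ∀ᶠ m : ℕ in atTop, trunc o m x = 0 := by
    filter_upwards [eventually_ge_atTop (Nat.ceil (dist x o))] with m hm
    have : dist x o - m ≤ 0 := by
      have h1 : dist x o ≤ (Nat.ceil (dist x o) : ℝ) := Nat.le_ceil _
      have h2 : ((Nat.ceil (dist x o) : ℕ) : ℝ) ≤ m := by exact_mod_cast hm
      linarith
    simp [trunc, max_eq_right this]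
  exact tendsto_const_nhds.congr' (this.mono fun m hm => hm.symm)

lemma trunc_abs_le (o : α) (m : ℕ) (x : α) : |trunc o m x| ≤ 1 := by
  rw [abs_of_nonneg (trunc_nonneg o m x)]; exact trunc_le_one o m x

lemma integrable_of_bound' {γ : Type*} [MeasurableSpace γ] [TopologicalSpace γ]
    [OpensMeasurableSpace γ] {ν : Measure γ} [IsFiniteMeasure ν] {f : γ → ℝ}
    (hf : Continuous f) {C : ℝ} (hb : ∀ x, |f x| ≤ C) : Integrable f ν :=
  Integrable.mono' (integrable_const C) hf.aestronglyMeasurable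
    (ae_of_all _ fun x => by rw [Real.norm_eq_abs]; exact hb x)

lemma trunc_integrable (o : α) (m : ℕ) (ν : Measure α) [IsFiniteMeasure ν] :
    Integrable (trunc o m) ν :=
  integrable_of_bound' (trunc_cont o m) (C := 1) (trunc_abs_le o m)

lemma trunc_integral_tendsto (o : α) (ν : Measure α) [IsProbabilityMeasure ν] :
    Tendsto (fun m : ℕ => ∫ x, trunc o m x ∂ν) atTop (𝓝 0) := by
  have := tendsto_integral_of_dominated_convergence (μ := ν)
    (F := fun m x => trunc o m x) (f := fun _ => (0:ℝ)) (bound := fun _ => 1)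
    (fun m => (trunc_cont o m).aestronglyMeasurable)
    (integrable_const 1)
    (fun m => ae_of_all _ fun x => by rw [Real.norm_eq_abs]; exact trunc_abs_le o m x)
    (ae_of_all _ fun x => trunc_tendsto o x)
  simpa using this

/-- `trunc` as a bounded continuous function. -/
noncomputable def truncBCF (o : α) (m : ℕ) : α →ᵇ ℝ :=
  BoundedContinuousFunction.ofNormedAddCommGroup (trunc o m) (trunc_cont o m) 1
    (fun x => by rw [Real.norm_eq_abs]; exact trunc_abs_le o m x)

lemma tight (Q : ℕ → ProbabilityMeasure α) (P : ProbabilityMeasure α)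
    (hQP : Tendsto Q atTop (𝓝 P)) (o : α) {δ : ℝ} (hδ : 0 < δ) :
    ∃ m : ℕ, (∀ n, ∫ x, trunc o m x ∂(Q n : Measure α) ≤ δ) ∧
      ∫ x, trunc o m x ∂(P : Measure α) ≤ δ := by
  have mono : ∀ (ν : Measure α), IsProbabilityMeasure ν → ∀ {m m' : ℕ}, m ≤ m' →
      ∫ x, trunc o m' x ∂ν ≤ ∫ x, trunc o m x ∂ν := by
    intro ν hν m m' hmm'
    exact integral_mono (trunc_integrable o m' ν) (trunc_integrable o m ν)
      (fun x => trunc_anti o x hmm')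
  obtain ⟨m0, hm0⟩ :=
    ((trunc_integral_tendsto o (P : Measure α)).eventually_lt_const hδ).exists
  have hconv : Tendsto (fun n => ∫ x, trunc o m0 x ∂(Q n : Measure α)) atTop
      (𝓝 (∫ x, trunc o m0 x ∂(P : Measure α))) :=
    ProbabilityMeasure.tendsto_iff_forall_integral_tendsto.mp hQP (truncBCF o m0)
  obtain ⟨N, hN⟩ := (hconv.eventually_lt_const hm0 |>.and (eventually_ge_atTop 0)).exists_forall_of_atTop
  have hchoice : ∀ n : ℕ, ∃ m : ℕ, ∫ x, trunc o m x ∂(Q n : Measure α) < δ := fun n =>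
    ((trunc_integral_tendsto o (Q n : Measure α)).eventually_lt_const hδ).exists
  choose f hf using hchoice
  refine ⟨max m0 ((Finset.range N).sup f), fun n => ?_, ?_⟩
  · rcases le_or_gt N n with hn | hn
    · exact le_trans (mono _ inferInstance (le_max_left _ _)) ((hN n hn).1.le)
    · have : f n ≤ max m0 ((Finset.range N).sup f) :=
        le_max_of_le_right (Finset.le_sup (Finset.mem_range.mpr hn))
      exact le_trans (mono _ inferInstance this) (hf n).le
  · exact le_trans (mono _ inferInstance (le_max_left _ _)) hm0.le

end Trunc

section Param

lemma cont_param {β γ : Type*} [TopologicalSpace β] [FirstCountableTopology β] [MeasurableSpace γ] [TopologicalSpace γ]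
    [OpensMeasurableSpace γ] {f : β → γ → ℝ} (hf : Continuous (Function.uncurry f))
    {C : ℝ} (hbd : ∀ x y, |f x y| ≤ C) (ν : Measure γ) [IsFiniteMeasure ν] :
    Continuous fun y => ∫ x, f y x ∂ν := by
  rw [continuous_iff_continuousAt]
  intro y₀
  apply continuousAt_of_dominated (bound := fun _ => C)
  · exact Eventually.of_forall fun y =>
      (hf.comp (Continuous.prodMk_right y)).aestronglyMeasurable
  · exact Eventually.of_forall fun y => ae_of_all _ fun x => by
      rw [Real.norm_eq_abs]; exact hbd y x
  · exact integrable_const C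
  · exact ae_of_all _ fun x =>
      (hf.comp (continuous_id.prodMk continuous_const)).continuousAt

lemma int_bound {γ : Type*} [MeasurableSpace γ] {f : γ → ℝ} {C : ℝ}
    (hbd : ∀ x, |f x| ≤ C) (ν : Measure γ) [IsProbabilityMeasure ν] :
    |∫ x, f x ∂ν| ≤ C := by
  have := norm_integral_le_of_norm_le_const (μ := ν) (f := f) (C := C)
    (ae_of_all _ fun x => by rw [Real.norm_eq_abs]; exact hbd x)
  simpa using this

end Param

section Key
variable {α : Type*} [MeasurableSpace α] [MetricSpace α] [OpensMeasurableSpace α]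

/-- the kernel slice as a bounded continuous function -/
noncomputable def kernBCF {k : α → α → ℝ} (hk : Continuous (Function.uncurry k))
    {C : ℝ} (hbd : ∀ x y, |k x y| ≤ C) (y : α) : α →ᵇ ℝ :=
  BoundedContinuousFunction.ofNormedAddCommGroup (k y)
    (hk.comp (Continuous.prodMk_right y)) C
    (fun x => by rw [Real.norm_eq_abs]; exact hbd y x)

lemma key_mixed {k : α → α → ℝ} (hk : Continuous (Function.uncurry k))
    {C : ℝ} (hbd : ∀ x y, |k x y| ≤ C)
    (Q : ℕ → ProbabilityMeasure α) (P : ProbabilityMeasure α)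
    (hQP : Tendsto Q atTop (𝓝 P)) :
    Tendsto (fun n => ∫ y, ∫ x, k y x ∂(P : Measure α) ∂(Q n : Measure α)) atTop
      (𝓝 (∫ y, ∫ x, k y x ∂(P : Measure α) ∂(P : Measure α))) :=
  ProbabilityMeasure.tendsto_iff_forall_integral_tendsto.mp hQP
    (BoundedContinuousFunction.ofNormedAddCommGroup
      (fun y => ∫ x, k y x ∂(P : Measure α)) (cont_param hk hbd _) C
      (fun y => by rw [Real.norm_eq_abs]; exact int_bound (fun x => hbd y x) _))

end Key

section Diag
variable {α : Type*} [MeasurableSpace α] [MetricSpace α] [OpensMeasurableSpace α]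

lemma key_diag [ProperSpace α] (o : α) {k : α → α → ℝ}
    (hk : Continuous (Function.uncurry k))
    {C : ℝ} (hC : 0 ≤ C) (hbd : ∀ x y, |k x y| ≤ C)
    (Q : ℕ → ProbabilityMeasure α) (P : ProbabilityMeasure α)
    (hQP : Tendsto Q atTop (𝓝 P)) :
    Tendsto (fun n => ∫ y, ∫ x, k y x ∂(Q n : Measure α) ∂(Q n : Measure α)) atTop
      (𝓝 (∫ y, ∫ x, k y x ∂(P : Measure α) ∂(P : Measure α))) := by
  set F : α → ℝ := fun y => ∫ x, k y x ∂(P : Measure α) with hFdef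
  set Fn : ℕ → α → ℝ := fun n y => ∫ x, k y x ∂(Q n : Measure α) with hFndef
  have hky_cont : ∀ y : α, Continuous (k y) := fun y => hk.comp (Continuous.prodMk_right y)
  have hFcont : Continuous F := cont_param hk hbd _
  have hFncont : ∀ n, Continuous (Fn n) := fun n => cont_param hk hbd _
  have hFb : ∀ y, |F y| ≤ C := fun y => int_bound (fun x => hbd y x) _
  have hFnb : ∀ n y, |Fn n y| ≤ C := fun n y => int_bound (fun x => hbd y x) _
  have hFint : ∀ (ν : Measure α), IsProbabilityMeasure ν → Integrable F ν := fun ν hν =>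
    integrable_of_bound' hFcont hFb
  have hFnint : ∀ n (ν : Measure α), IsProbabilityMeasure ν → Integrable (Fn n) ν :=
    fun n ν hν => integrable_of_bound' (hFncont n) (hFnb n)
  -- decomposition
  have hdecomp : ∀ n, (∫ y, Fn n y ∂(Q n : Measure α))
      = (∫ y, (Fn n y - F y) ∂(Q n : Measure α)) + ∫ y, F y ∂(Q n : Measure α) := by
    intro n
    rw [integral_sub (hFnint n _ inferInstance) (hFint _ inferInstance)]
    ring
  have h2 : Tendsto (fun n => ∫ y, F y ∂(Q n : Measure α)) atTop
      (𝓝 (∫ y, F y ∂(P : Measure α))) :=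
    ProbabilityMeasure.tendsto_iff_forall_integral_tendsto.mp hQP
      (BoundedContinuousFunction.ofNormedAddCommGroup F hFcont C
        (fun y => by rw [Real.norm_eq_abs]; exact hFb y))
  have h1 : Tendsto (fun n => ∫ y, (Fn n y - F y) ∂(Q n : Measure α)) atTop (𝓝 0) := by
    rw [NormedAddCommGroup.tendsto_nhds_zero]
    intro ε hε
    set δ : ℝ := ε / (4 + 6 * C) with hδdef
    have hδ : 0 < δ := div_pos hε (by linarith)
    obtain ⟨m, hmQ, hmP⟩ := tight Q P hQP o hδ
    set K : Set α := closedBall o (m + 1) with hKdef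
    have hKcomp : IsCompact K := isCompact_closedBall o _
    have hucont := (hKcomp.prod hKcomp).uniformContinuousOn_of_continuous hk.continuousOn
    rw [Metric.uniformContinuousOn_iff] at hucont
    obtain ⟨η, hη, hηprop⟩ := hucont δ hδ
    obtain ⟨t, htK, htfin, hcover⟩ := hKcomp.finite_cover_balls hη
    -- uniform-in-y bound for the difference of slice integrals, for nearby points of K
    have hdiff : ∀ (ν : Measure α), IsProbabilityMeasure ν → ∀ y ∈ K, ∀ j ∈ K,
        dist y j < η →
        |(∫ x, k y x ∂ν) - ∫ x, k j x ∂ν| ≤ δ + 2 * C * ∫ x, trunc o m x ∂ν := by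
      intro ν hν y hy j hj hyj
      haveI := hν
      have hint1 : Integrable (k y) ν := integrable_of_bound' (hky_cont y) (hbd y)
      have hint2 : Integrable (k j) ν := integrable_of_bound' (hky_cont j) (hbd j)
      rw [← integral_sub hint1 hint2]
      have hptw : ∀ x, |k y x - k j x| ≤ δ + 2 * C * trunc o m x := by
        intro x
        by_cases hx : dist x o ≤ (m : ℝ) + 1
        · have hxK : x ∈ K := mem_closedBall.mpr hx
          have := hηprop (y, x) ⟨hy, hxK⟩ (j, x) ⟨hj, hxK⟩
            (by rw [Prod.dist_eq]; simpa [dist_self] using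
              max_lt hyj hη)
          rw [Real.dist_eq] at this
          have this2 : |k y x - k j x| < δ := this
          have h0 : 0 ≤ 2 * C * trunc o m x := by
            have := trunc_nonneg o m x; positivity
          linarith [this2]
        · have h1 : trunc o m x = 1 := trunc_eq_one (not_le.mp hx).le
          have : |k y x - k j x| ≤ 2 * C := by
            calc |k y x - k j x| ≤ |k y x| + |k j x| := abs_sub _ _
              _ ≤ 2 * C := by linarith [hbd y x, hbd j x]
          rw [h1]; linarith
      calc |∫ x, (k y x - k j x) ∂ν| ≤ ∫ x, |k y x - k j x| ∂ν := by
            simpa [Real.norm_eq_abs] using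
              norm_integral_le_integral_norm (μ := ν) (f := fun x => k y x - k j x)
        _ ≤ ∫ x, (δ + 2 * C * trunc o m x) ∂ν := by
            apply integral_mono ((hint1.sub hint2).abs) ?_ hptw
            exact (integrable_const δ).add ((trunc_integrable o m ν).const_mul (2 * C))
        _ = δ + 2 * C * ∫ x, trunc o m x ∂ν := by
            rw [integral_add (integrable_const δ) ((trunc_integrable o m ν).const_mul (2 * C)),
              integral_const, integral_const_mul]
            simp
    -- pointwise convergence at the net points
    have hptwise : ∀ᶠ n in atTop, ∀ j ∈ t, |Fn n j - F j| ≤ δ := by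
      rw [eventually_all_finite htfin]
      intro j hj
      have hconv : Tendsto (fun n => Fn n j) atTop (𝓝 (F j)) :=
        ProbabilityMeasure.tendsto_iff_forall_integral_tendsto.mp hQP (kernBCF hk hbd j)
      filter_upwards [Metric.tendsto_nhds.mp hconv δ hδ] with n hn
      rw [Real.dist_eq] at hn
      exact hn.le
    filter_upwards [hptwise] with n hn
    set s : ℝ := 3 * δ + 4 * C * δ with hsdef
    have hs : 0 ≤ s := by positivity
    have hkey : ∀ y, |Fn n y - F y| ≤ s + 2 * C * trunc o m y := by
      intro y
      by_cases hy : dist y o ≤ (m : ℝ) + 1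
      · have hyK : y ∈ K := mem_closedBall.mpr hy
        obtain ⟨j, hjt, hyj⟩ : ∃ j ∈ t, dist y j < η := by
          have := hcover hyK
          simp only [Set.mem_iUnion, mem_ball] at this
          obtain ⟨j, hjt, hdj⟩ := this
          exact ⟨j, hjt, hdj⟩
        have hjK : j ∈ K := htK hjt
        have e1 : |Fn n y - Fn n j| ≤ δ + 2 * C * δ := by
          have := hdiff (Q n : Measure α) inferInstance y hyK j hjK hyj
          have h2C : 0 ≤ 2 * C := by linarith
          have := this.trans (by nlinarith [hmQ n] : δ + 2 * C * ∫ x, trunc o m x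
            ∂(Q n : Measure α) ≤ δ + 2 * C * δ)
          exact this
        have e2 : |Fn n j - F j| ≤ δ := hn j hjt
        have e3 : |F j - F y| ≤ δ + 2 * C * δ := by
          have := hdiff (P : Measure α) inferInstance j hjK y hyK (by rwa [dist_comm])
          exact this.trans (by nlinarith [hmP])
        have tri : |Fn n y - F y| ≤ |Fn n y - Fn n j| + |Fn n j - F j| + |F j - F y| := by
          have := abs_sub_le (Fn n y) (Fn n j) (F y)
          have h2 := abs_sub_le (Fn n j) (F j) (F y)
          linarith
        have h0 : 0 ≤ 2 * C * trunc o m y := by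
          have := trunc_nonneg o m y; positivity
        rw [hsdef]
        linarith
      · have h1 : trunc o m y = 1 := trunc_eq_one (not_le.mp hy).le
        have : |Fn n y - F y| ≤ 2 * C := by
          calc |Fn n y - F y| ≤ |Fn n y| + |F y| := abs_sub _ _
            _ ≤ 2 * C := by linarith [hFnb n y, hFb y]
        rw [h1]; linarith
    have hfinal : ‖∫ y, (Fn n y - F y) ∂(Q n : Measure α)‖ ≤ s + 2 * C * δ := by
      have hint : Integrable (fun y => Fn n y - F y) (Q n : Measure α) :=
        (hFnint n _ inferInstance).sub (hFint _ inferInstance)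
      calc ‖∫ y, (Fn n y - F y) ∂(Q n : Measure α)‖
          ≤ ∫ y, |Fn n y - F y| ∂(Q n : Measure α) := by
            simpa [Real.norm_eq_abs] using norm_integral_le_integral_norm
              (μ := (Q n : Measure α)) (f := fun y => Fn n y - F y)
        _ ≤ ∫ y, (s + 2 * C * trunc o m y) ∂(Q n : Measure α) := by
            apply integral_mono hint.abs ?_ hkey
            exact (integrable_const s).add
              ((trunc_integrable o m (Q n : Measure α)).const_mul (2 * C))
        _ = s + 2 * C * ∫ y, trunc o m y ∂(Q n : Measure α) := by
            rw [integral_add (integrable_const s)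
              ((trunc_integrable o m (Q n : Measure α)).const_mul (2 * C)),
              integral_const, integral_const_mul]
            simp
        _ ≤ s + 2 * C * δ := by nlinarith [hmQ n]
    calc ‖∫ y, (Fn n y - F y) ∂(Q n : Measure α)‖ ≤ s + 2 * C * δ := hfinal
      _ = (3 + 6 * C) * δ := by rw [hsdef]; ring
      _ < (4 + 6 * C) * δ := by nlinarith
      _ = ε := by rw [hδdef]; field_simp
  have := h1.add h2
  rw [zero_add] at this
  refine Tendsto.congr (fun n => ?_) this
  exact (hdecomp n).symm

end Diag

/-- The uniform probability measure on the cube `[-1,1]^d` in `ℝ^d`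
(normalized Lebesgue measure on the cube), as a product of normalized
Lebesgue measures on `[-1,1]`. -/
noncomputable def cubeUniform (d : ℕ) : Measure (Fin d → ℝ) :=
  Measure.pi fun _ => (2 : ℝ≥0∞)⁻¹ • volume.restrict (Set.Icc (-1 : ℝ) 1)

instance cubeUniform_prob (d : ℕ) : IsProbabilityMeasure (cubeUniform d) := by
  have : IsProbabilityMeasure ((2 : ℝ≥0∞)⁻¹ • volume.restrict (Set.Icc (-1 : ℝ) 1)) := by
    constructor
    rw [Measure.smul_apply, Measure.restrict_apply MeasurableSet.univ, Set.univ_inter,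
      Real.volume_Icc]
    norm_num
    exact ENNReal.inv_mul_cancel (by norm_num) (by norm_num)
  unfold cubeUniform
  infer_instance

/-- Paper's Theorem 4 for the KernelNet kernel: under the second-moment condition
on the spectral distribution `μ`, continuous differentiability of `t¹, t²` and a
Lipschitz feature map `h`, the squared MMD of the KernelNet kernel is continuous
in the weak topology: `Qₙ → P` weakly implies `MMD²_k(Qₙ, P) → 0`. -/
theorem stmt_7 {d D : ℕ} (μ : Measure (EuclideanSpace ℝ (Fin d))) [IsProbabilityMeasure μ]
    (hμ : Integrable (fun ω => ‖ω‖ ^ 2) μ)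
    (t1 t2 : EuclideanSpace ℝ (Fin d) → EuclideanSpace ℝ (Fin d))
    (ht1 : ContDiff ℝ 1 t1) (ht2 : ContDiff ℝ 1 t2)
    (h : EuclideanSpace ℝ (Fin D) → EuclideanSpace ℝ (Fin d))
    (hh : ∃ K, LipschitzWith K h)
    (k : EuclideanSpace ℝ (Fin D) → EuclideanSpace ℝ (Fin D) → ℝ)
    (hk : ∀ x y, k x y =
      (∫ ω, Real.cos ⟪ω, h x - h y⟫ ∂μ) +
      ∫ ε, Real.cos
        ⟪(WithLp.equiv 2 (Fin d → ℝ)).symm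
            (fun i => (t1 (h x) i + t1 (h y) i) +
              ε i * Real.exp (t2 (h x) i + t2 (h y) i)),
          h x - h y⟫ ∂(cubeUniform d))
    (Q : ℕ → ProbabilityMeasure (EuclideanSpace ℝ (Fin D)))
    (P : ProbabilityMeasure (EuclideanSpace ℝ (Fin D)))
    (hQP : Tendsto Q atTop (𝓝 P)) :
    Tendsto (fun n =>
        (∫ y, ∫ y', k y y' ∂(Q n : Measure _) ∂(Q n : Measure _))
          - 2 * (∫ y, ∫ x, k y x ∂(P : Measure _) ∂(Q n : Measure _))
          + ∫ x, ∫ x', k x x' ∂(P : Measure _) ∂(P : Measure _))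
      atTop (𝓝 0) := by

  obtain ⟨L, hL⟩ := hh
  have hhc : Continuous h := hL.continuous
  -- boundedness
  have hbd : ∀ x y, |k x y| ≤ 2 := by
    intro x y
    rw [hk x y]
    have b1 : |∫ ω, Real.cos ⟪ω, h x - h y⟫ ∂μ| ≤ 1 :=
      int_bound (fun ω => Real.abs_cos_le_one _) μ
    have b2 : |∫ ε, Real.cos
        ⟪(WithLp.equiv 2 (Fin d → ℝ)).symm
            (fun i => (t1 (h x) i + t1 (h y) i) +
              ε i * Real.exp (t2 (h x) i + t2 (h y) i)),
          h x - h y⟫ ∂(cubeUniform d)| ≤ 1 :=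
      int_bound (fun ε => Real.abs_cos_le_one _) (cubeUniform d)
    have := abs_add_le (∫ ω, Real.cos ⟪ω, h x - h y⟫ ∂μ)
      (∫ ε, Real.cos
        ⟪(WithLp.equiv 2 (Fin d → ℝ)).symm
            (fun i => (t1 (h x) i + t1 (h y) i) +
              ε i * Real.exp (t2 (h x) i + t2 (h y) i)),
          h x - h y⟫ ∂(cubeUniform d))
    linarith
  -- continuity of the kernel
  have hkc : Continuous (Function.uncurry k) := by
    have heq : Function.uncurry k =
        fun p : (EuclideanSpace ℝ (Fin D)) × (EuclideanSpace ℝ (Fin D)) =>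
        (∫ ω, Real.cos ⟪ω, h p.1 - h p.2⟫ ∂μ) +
        ∫ ε, Real.cos
          ⟪(WithLp.equiv 2 (Fin d → ℝ)).symm
              (fun i => (t1 (h p.1) i + t1 (h p.2) i) +
                ε i * Real.exp (t2 (h p.1) i + t2 (h p.2) i)),
            h p.1 - h p.2⟫ ∂(cubeUniform d) :=
      funext fun p => hk p.1 p.2
    rw [heq]
    have hdiffc : Continuous (fun p : (EuclideanSpace ℝ (Fin D)) × (EuclideanSpace ℝ (Fin D)) =>
        h p.1 - h p.2) :=
      (hhc.comp continuous_fst).sub (hhc.comp continuous_snd)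
    have c1 : Continuous (fun p : (EuclideanSpace ℝ (Fin D)) × (EuclideanSpace ℝ (Fin D)) =>
        ∫ ω, Real.cos ⟪ω, h p.1 - h p.2⟫ ∂μ) := by
      apply cont_param
        (f := fun (p : (EuclideanSpace ℝ (Fin D)) × (EuclideanSpace ℝ (Fin D)))
          (ω : EuclideanSpace ℝ (Fin d)) => Real.cos ⟪ω, h p.1 - h p.2⟫)
        (C := 1) ?_ (fun p ω => Real.abs_cos_le_one _)
      exact Real.continuous_cos.comp
        (Continuous.inner continuous_snd (hdiffc.comp continuous_fst))
    have c2 : Continuous (fun p : (EuclideanSpace ℝ (Fin D)) × (EuclideanSpace ℝ (Fin D)) =>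
        ∫ ε, Real.cos
          ⟪(WithLp.equiv 2 (Fin d → ℝ)).symm
              (fun i => (t1 (h p.1) i + t1 (h p.2) i) +
                ε i * Real.exp (t2 (h p.1) i + t2 (h p.2) i)),
            h p.1 - h p.2⟫ ∂(cubeUniform d)) := by
      apply cont_param
        (f := fun (p : (EuclideanSpace ℝ (Fin D)) × (EuclideanSpace ℝ (Fin D)))
          (ε : Fin d → ℝ) => Real.cos
          ⟪(WithLp.equiv 2 (Fin d → ℝ)).symm
              (fun i => (t1 (h p.1) i + t1 (h p.2) i) +
                ε i * Real.exp (t2 (h p.1) i + t2 (h p.2) i)),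
            h p.1 - h p.2⟫)
        (C := 1) ?_ (fun p ε => Real.abs_cos_le_one _)
      apply Real.continuous_cos.comp
      apply Continuous.inner
      · apply (PiLp.continuous_toLp 2 (fun _ : Fin d => ℝ)).comp
        apply continuous_pi
        intro i
        have hq11 : Continuous (fun q :
            ((EuclideanSpace ℝ (Fin D)) × (EuclideanSpace ℝ (Fin D))) × (Fin d → ℝ) =>
            q.1.1) := continuous_fst.comp continuous_fst
        have hq12 : Continuous (fun q :
            ((EuclideanSpace ℝ (Fin D)) × (EuclideanSpace ℝ (Fin D))) × (Fin d → ℝ) =>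
            q.1.2) := continuous_snd.comp continuous_fst
        have hx1 := (continuous_apply i).comp
          ((PiLp.continuous_ofLp 2 (fun _ : Fin d => ℝ)).comp
            (ht1.continuous.comp (hhc.comp hq11)))
        have hx2 := (continuous_apply i).comp
          ((PiLp.continuous_ofLp 2 (fun _ : Fin d => ℝ)).comp
            (ht1.continuous.comp (hhc.comp hq12)))
        have hy1 := (continuous_apply i).comp
          ((PiLp.continuous_ofLp 2 (fun _ : Fin d => ℝ)).comp
            (ht2.continuous.comp (hhc.comp hq11)))
        have hy2 := (continuous_apply i).comp
          ((PiLp.continuous_ofLp 2 (fun _ : Fin d => ℝ)).comp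
            (ht2.continuous.comp (hhc.comp hq12)))
        have hei : Continuous (fun q :
            ((EuclideanSpace ℝ (Fin D)) × (EuclideanSpace ℝ (Fin D))) × (Fin d → ℝ) =>
            q.2 i) := (continuous_apply i).comp continuous_snd
        exact (hx1.add hx2).add (hei.mul (Real.continuous_exp.comp (hy1.add hy2)))
      · exact hdiffc.comp continuous_fst
    exact c1.add c2
  -- assembly
  have hA := key_diag (0 : EuclideanSpace ℝ (Fin D)) hkc (C := 2) (by norm_num) hbd Q P hQP
  have hB := key_mixed hkc hbd Q P hQP
  have hcomb := (hA.sub (hB.const_mul 2)).add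
    (tendsto_const_nhds (x := ∫ x, ∫ x', k x x'
      ∂(P : Measure (EuclideanSpace ℝ (Fin D))) ∂(P : Measure (EuclideanSpace ℝ (Fin D))))
      (f := atTop))
  have hzero : (∫ y, ∫ x, k y x ∂(P : Measure (EuclideanSpace ℝ (Fin D)))
        ∂(P : Measure (EuclideanSpace ℝ (Fin D))))
      - 2 * (∫ y, ∫ x, k y x ∂(P : Measure (EuclideanSpace ℝ (Fin D)))
        ∂(P : Measure (EuclideanSpace ℝ (Fin D))))
      + (∫ x, ∫ x', k x x' ∂(P : Measure (EuclideanSpace ℝ (Fin D)))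
        ∂(P : Measure (EuclideanSpace ℝ (Fin D)))) = 0 := by ring
  rw [hzero] at hcomb
  exact hcomb
end

section
/- Let k : ℝ^D × ℝ^D → ℝ be a bounded continuous function, let P be a probability measure on ℝ^D, and let (Q_n) be a sequence of probability measures on ℝ^D converging weakly (in distribution) to P. Then MMD²_k(Q_n, P) := ∫∫ k(y, y') dQ_n(y) dQ_n(y') − 2 ∫∫ k(y, x) dQ_n(y) dP(x) + ∫∫ k(x, x') dP(x) dP(x') converges to 0 as n → ∞. -/
open MeasureTheory Filter TopologicalSpace
open scoped Topology

/-!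
Weak convergence is preserved under products of probability measures, so by Fubini each double
integral in `MMD²_k(Qₙ, P)` is the integral of the bounded continuous function `uncurry k` against a
weakly convergent sequence of product measures. All three terms therefore tend to `∫∫ k dP dP`,
and the coefficients `1 - 2 + 1` cancel.
-/

theorem MeasureTheory.ProbabilityMeasure.tendsto_integral_integral_of_tendsto
    {X Y ι : Type*} [TopologicalSpace X] [MeasurableSpace X] [OpensMeasurableSpace X]
    [SecondCountableTopology X] [PseudoMetrizableSpace X]
    [TopologicalSpace Y] [MeasurableSpace Y] [OpensMeasurableSpace Y]
    [SecondCountableTopology Y] [PseudoMetrizableSpace Y]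
    {f : X → Y → ℝ} (hf : Continuous (Function.uncurry f)) (hf_bdd : ∃ C, ∀ x y, |f x y| ≤ C)
    {l : Filter ι} {μ : ι → ProbabilityMeasure X} {ν : ι → ProbabilityMeasure Y}
    {μ₀ : ProbabilityMeasure X} {ν₀ : ProbabilityMeasure Y}
    (hμ : Tendsto μ l (𝓝 μ₀)) (hν : Tendsto ν l (𝓝 ν₀)) :
    Tendsto (fun i => ∫ x, ∫ y, f x y ∂(ν i : Measure Y) ∂(μ i : Measure X)) l
      (𝓝 (∫ x, ∫ y, f x y ∂(ν₀ : Measure Y) ∂(μ₀ : Measure X))) := by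
  obtain ⟨C, hC⟩ := hf_bdd
  let g := BoundedContinuousFunction.ofNormedAddCommGroup (Function.uncurry f) hf C
    fun z => hC z.1 z.2
  have hprod : Tendsto (fun i => (μ i).prod (ν i)) l (𝓝 (μ₀.prod ν₀)) :=
    (continuous_prod.tendsto (μ₀, ν₀)).comp (hμ.prodMk_nhds hν)
  have hint := tendsto_iff_forall_integral_tendsto.mp hprod g
  simp only [toMeasure_prod, integral_prod _ (g.integrable _)] at hint
  exact hint

/-- The analytic core of the paper's Theorem 4: for a bounded continuous kernel `k`,
weak convergence `Qₙ → P` implies `MMD²_k(Qₙ, P) → 0`. -/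
theorem stmt_8 {D : ℕ}
    (k : EuclideanSpace ℝ (Fin D) → EuclideanSpace ℝ (Fin D) → ℝ)
    (hk_cont : Continuous (Function.uncurry k))
    (hk_bdd : ∃ M, ∀ x y, |k x y| ≤ M)
    (P : ProbabilityMeasure (EuclideanSpace ℝ (Fin D)))
    (Q : ℕ → ProbabilityMeasure (EuclideanSpace ℝ (Fin D)))
    (hQP : Tendsto Q atTop (𝓝 P)) :
    Tendsto (fun n =>
        (∫ y, ∫ y', k y y' ∂(Q n : Measure _) ∂(Q n : Measure _))
          - 2 * (∫ y, ∫ x, k y x ∂(P : Measure _) ∂(Q n : Measure _))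
          + ∫ x, ∫ x', k x x' ∂(P : Measure _) ∂(P : Measure _))
      atTop (𝓝 0) := by
  have hdiag := ProbabilityMeasure.tendsto_integral_integral_of_tendsto hk_cont hk_bdd hQP hQP
  have hcross := ProbabilityMeasure.tendsto_integral_integral_of_tendsto hk_cont hk_bdd hQP
    (tendsto_const_nhds (x := P))
  set C := ∫ x, ∫ x', k x x' ∂(P : Measure _) ∂(P : Measure _)
  have hlim : C - 2 * C + C = 0 := by ring
  simpa only [hlim] using (hdiag.sub (hcross.const_mul 2)).add_const C
end

section
/- Let μ be a probability measure on ℝ^d with C := ∫_{ℝ^d} ‖ω‖² dμ(ω) < ∞, and define the kernel k(z1, z2) = ∫_{ℝ^d} cos(⟨ω, z1 − z2⟩) dμ(ω). Then for all z1, z2 ∈ ℝ^d, 0 ≤ k(z1, z1) + k(z2, z2) − 2·k(z1, z2) ≤ C·‖z1 − z2‖². -/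
open MeasureTheory Real
open scoped RealInnerProductSpace

/-!
Since `k(z, z) = 1`, the quantity equals `2 ∫ (1 - cos⟪ω, z₁ - z₂⟫) dμ(ω)`. It is nonnegative
because `cos ≤ 1`, and `1 - cos t ≤ t² / 2` together with Cauchy–Schwarz
`⟪ω, z⟫² ≤ ‖ω‖² ‖z‖²` bounds it by `E‖ω‖² · ‖z₁ - z₂‖²`.
-/

section ProbabilityMeasure

variable {Ω : Type*} [MeasurableSpace Ω] {μ : Measure Ω} [IsProbabilityMeasure μ]

theorem integral_cos_le_one (f : Ω → ℝ) : ∫ ω, cos (f ω) ∂μ ≤ 1 := by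
  have h := norm_integral_le_of_norm_le_const (μ := μ) (C := 1)
    (ae_of_all _ fun ω => (norm_eq_abs (cos (f ω))).trans_le (abs_cos_le_one _))
  rw [probReal_univ, mul_one, norm_eq_abs] at h
  exact (le_abs_self _).trans h

theorem one_sub_integral_cos_le {f : Ω → ℝ} (hf : AEStronglyMeasurable f μ)
    (hf2 : Integrable (fun ω => f ω ^ 2) μ) :
    1 - ∫ ω, cos (f ω) ∂μ ≤ (∫ ω, f ω ^ 2 ∂μ) / 2 := by
  have hcos : Integrable (fun ω => cos (f ω)) μ :=
    (integrable_const 1).mono' (continuous_cos.comp_aestronglyMeasurable hf)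
      (ae_of_all _ fun ω => (norm_eq_abs _).trans_le (abs_cos_le_one _))
  have h : ∫ ω, (1 - f ω ^ 2 / 2) ∂μ ≤ ∫ ω, cos (f ω) ∂μ :=
    integral_mono ((integrable_const 1).sub (hf2.div_const 2)) hcos
      fun ω => one_sub_sq_div_two_le_cos
  rw [integral_sub (integrable_const 1) (hf2.div_const 2), integral_div, integral_const,
    probReal_univ, one_smul] at h
  linarith

end ProbabilityMeasure

section InnerProductSpace

variable {E : Type*} [NormedAddCommGroup E] [InnerProductSpace ℝ E]

theorem real_inner_sq_le_norm_sq_mul_norm_sq (x y : E) : ⟪x, y⟫ ^ 2 ≤ ‖x‖ ^ 2 * ‖y‖ ^ 2 := by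
  rw [← sq_abs, ← mul_pow]
  exact pow_le_pow_left₀ (abs_nonneg _) (abs_real_inner_le_norm x y) 2

variable [MeasurableSpace E] [OpensMeasurableSpace E] {μ : Measure E}

theorem MeasureTheory.Integrable.inner_sq (hμ : Integrable (fun ω => ‖ω‖ ^ 2) μ) (z : E) :
    Integrable (fun ω => ⟪ω, z⟫ ^ 2) μ :=
  (hμ.mul_const (‖z‖ ^ 2)).mono'
    ((continuous_id.inner continuous_const).pow 2).aestronglyMeasurable
    (ae_of_all _ fun ω => by
      rw [norm_eq_abs, abs_of_nonneg (sq_nonneg _)]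
      exact real_inner_sq_le_norm_sq_mul_norm_sq ω z)

theorem integral_inner_sq_le (hμ : Integrable (fun ω => ‖ω‖ ^ 2) μ) (z : E) :
    ∫ ω, ⟪ω, z⟫ ^ 2 ∂μ ≤ (∫ ω, ‖ω‖ ^ 2 ∂μ) * ‖z‖ ^ 2 := by
  rw [← integral_mul_const]
  exact integral_mono (hμ.inner_sq z) (hμ.mul_const _)
    fun ω => real_inner_sq_le_norm_sq_mul_norm_sq ω z

end InnerProductSpace

/-- RKHS-distance bound for the random-feature kernel
`k(z₁,z₂) = ∫ cos⟨ω, z₁−z₂⟩ dμ(ω)` under the second-moment condition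
`C = E‖ω‖² < ∞`: `0 ≤ k(z₁,z₁) + k(z₂,z₂) − 2k(z₁,z₂) ≤ C‖z₁ − z₂‖²`. -/
theorem stmt_11 {d : ℕ} (μ : Measure (EuclideanSpace ℝ (Fin d))) [IsProbabilityMeasure μ]
    (hμ : Integrable (fun ω => ‖ω‖ ^ 2) μ)
    (C : ℝ) (hC : C = ∫ ω, ‖ω‖ ^ 2 ∂μ)
    (k : EuclideanSpace ℝ (Fin d) → EuclideanSpace ℝ (Fin d) → ℝ)
    (hk : ∀ z1 z2, k z1 z2 = ∫ ω, Real.cos ⟪ω, z1 - z2⟫ ∂μ)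
    (z1 z2 : EuclideanSpace ℝ (Fin d)) :
    0 ≤ k z1 z1 + k z2 z2 - 2 * k z1 z2 ∧
      k z1 z1 + k z2 z2 - 2 * k z1 z2 ≤ C * ‖z1 - z2‖ ^ 2 := by
  have hdiag : ∀ w, k w w = 1 := fun w => by simp [hk]
  have hdist : k z1 z1 + k z2 z2 - 2 * k z1 z2 = 2 * (1 - ∫ ω, cos ⟪ω, z1 - z2⟫ ∂μ) := by
    rw [hdiag, hdiag, hk]
    ring
  rw [hdist, hC]
  constructor
  · linarith [integral_cos_le_one (μ := μ) fun ω => ⟪ω, z1 - z2⟫]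
  · have hmeas : AEStronglyMeasurable (fun ω => ⟪ω, z1 - z2⟫) μ :=
      (continuous_id.inner continuous_const).aestronglyMeasurable
    linarith [integral_inner_sq_le hμ (z1 - z2),
      one_sub_integral_cos_le hmeas (hμ.inner_sq (z1 - z2))]
end

section
/- Let μ be a probability measure on ℝ^d, define the kernel k(x, y) = ∫_{ℝ^d} cos(⟨ω, x − y⟩) dμ(ω), and let P, Q be probability measures on ℝ^d. Then MMD²_k(P, Q) = ∫_{ℝ^d} | φ_P(ω) − φ_Q(ω) |² dμ(ω), where φ_P(ω) = ∫ exp(i·⟨ω, x⟩) dP(x) ∈ ℂ is the characteristic function of P and |·| is the complex modulus. In particular, MMD²_k(P, Q) ≥ 0, with equality when P = Q. -/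
open MeasureTheory Real
open scoped RealInnerProductSpace

/-!
Writing `cos ⟪ω, x - y⟫ = Re (e^{i⟪x, ω⟫} · conj e^{i⟪y, ω⟫})` and integrating first in `x` and
`y` (Fubini, the integrand being bounded and continuous), every term of `MMD²_k(P, Q)` becomes
`∫ Re (φ_R · conj φ_S) dμ` for `R, S ∈ {P, Q}`; these combine into `∫ ‖φ_P - φ_Q‖² dμ`.
-/

open Complex (I exp re)
open ComplexConjugate

section Fubini

variable {X Y Z : Type*}
  [TopologicalSpace X] [MeasurableSpace X] [OpensMeasurableSpace X] [SecondCountableTopology X]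
  [TopologicalSpace Y] [MeasurableSpace Y] [OpensMeasurableSpace Y] [SecondCountableTopology Y]
  [TopologicalSpace Z] [MeasurableSpace Z] [OpensMeasurableSpace Z] [SecondCountableTopology Z]
  {μX : Measure X} {μY : Measure Y} {μZ : Measure Z}
  [IsFiniteMeasure μX] [IsFiniteMeasure μY] [IsFiniteMeasure μZ]

theorem integral_integral_integral_swap_of_continuous {f : X → Y → Z → ℝ}
    (hf : Continuous fun p : (X × Y) × Z => f p.1.1 p.1.2 p.2) {C : ℝ}
    (hC : ∀ x y z, |f x y z| ≤ C) :
    ∫ x, ∫ y, ∫ z, f x y z ∂μZ ∂μY ∂μX = ∫ z, ∫ x, ∫ y, f x y z ∂μY ∂μX ∂μZ := by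
  have hint : Integrable (fun p : (X × Y) × Z => f p.1.1 p.1.2 p.2) ((μX.prod μY).prod μZ) :=
    .of_bound hf.aestronglyMeasurable C (ae_of_all _ fun p => hC _ _ _)
  calc ∫ x, ∫ y, ∫ z, f x y z ∂μZ ∂μY ∂μX
      = ∫ p : X × Y, ∫ z, f p.1 p.2 z ∂μZ ∂(μX.prod μY) :=
        (integral_prod _ hint.integral_prod_left).symm
    _ = ∫ z, ∫ p : X × Y, f p.1 p.2 z ∂(μX.prod μY) ∂μZ := integral_integral_swap hint
    _ = ∫ z, ∫ x, ∫ y, f x y z ∂μY ∂μX ∂μZ := by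
        congr 1 with z
        refine integral_prod _ (.of_bound ?_ C (ae_of_all _ fun p => hC _ _ _))
        exact (hf.comp (.prodMk continuous_id continuous_const)).aestronglyMeasurable

end Fubini

section CharFun

variable {E : Type*} [NormedAddCommGroup E] [InnerProductSpace ℝ E]

theorem charFun_eq_integral_exp_I_mul_inner [MeasurableSpace E] (P : Measure E) (ω : E) :
    charFun P ω = ∫ x, exp (I * (⟪ω, x⟫ : ℝ)) ∂P := by
  simp only [charFun_apply, real_inner_comm ω, mul_comm I]

theorem cos_inner_sub_eq_re_exp_mul_exp (ω x y : E) :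
    cos ⟪ω, x - y⟫ = re (exp (⟪x, ω⟫ * I) * exp (⟪y, -ω⟫ * I)) := by
  rw [← Complex.exp_add, ← add_mul, ← Complex.ofReal_add, Complex.exp_ofReal_mul_I_re,
    inner_neg_right, ← sub_eq_add_neg, inner_sub_right, real_inner_comm ω, real_inner_comm ω]

variable [MeasurableSpace E] [BorelSpace E] [SecondCountableTopology E]

theorem integrable_exp_inner_mul_I (P : Measure E) [IsFiniteMeasure P] (ω : E) :
    Integrable (fun x => exp (⟪x, ω⟫ * I)) P :=
  .of_bound (by fun_prop) 1 (ae_of_all _ fun x => by simp [Complex.norm_exp_ofReal_mul_I])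

theorem integral_integral_cos_inner_sub (P Q : Measure E) [IsFiniteMeasure P] [IsFiniteMeasure Q]
    (ω : E) :
    ∫ x, ∫ y, cos ⟪ω, x - y⟫ ∂Q ∂P = re (charFun P ω * conj (charFun Q ω)) := by
  have hinner (x : E) : ∫ y, cos ⟪ω, x - y⟫ ∂Q = re (exp (⟪x, ω⟫ * I) * charFun Q (-ω)) := by
    simp only [cos_inner_sub_eq_re_exp_mul_exp, charFun_apply]
    rw [← integral_const_mul, ← RCLike.re_to_complex, ← integral_re]
    · rfl
    · exact (integrable_exp_inner_mul_I Q (-ω)).const_mul _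
  simp only [hinner, charFun_neg]
  rw [charFun_apply (μ := P), ← integral_mul_const, ← RCLike.re_to_complex, ← integral_re]
  · rfl
  · exact (integrable_exp_inner_mul_I P ω).mul_const _

theorem integrable_re_charFun_mul_conj (μ P Q : Measure E) [IsFiniteMeasure μ] [IsFiniteMeasure P]
    [IsFiniteMeasure Q] :
    Integrable (fun ω => re (charFun P ω * conj (charFun Q ω))) μ := by
  refine .of_bound (by fun_prop) (P.real Set.univ * Q.real Set.univ) (ae_of_all _ fun ω => ?_)
  calc ‖re (charFun P ω * conj (charFun Q ω))‖ ≤ ‖charFun P ω * conj (charFun Q ω)‖ :=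
        Complex.abs_re_le_norm _
    _ ≤ P.real Set.univ * Q.real Set.univ := by
        rw [norm_mul, Complex.norm_conj]
        exact mul_le_mul (norm_charFun_le ω) (norm_charFun_le ω) (norm_nonneg _) (by positivity)

theorem integral_integral_integral_cos_inner_sub (μ P Q : Measure E) [IsFiniteMeasure μ]
    [IsFiniteMeasure P] [IsFiniteMeasure Q] :
    ∫ x, ∫ y, (∫ ω, cos ⟪ω, x - y⟫ ∂μ) ∂Q ∂P = ∫ ω, re (charFun P ω * conj (charFun Q ω)) ∂μ := by
  rw [integral_integral_integral_swap_of_continuous (by fun_prop) (fun _ _ _ => abs_cos_le_one _)]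
  simp only [integral_integral_cos_inner_sub]

end CharFun

theorem Complex.norm_sub_sq_eq_re_mul_conj (a b : ℂ) :
    ‖a - b‖ ^ 2 = re (a * conj a) - 2 * re (a * conj b) + re (b * conj b) := by
  simp only [Complex.sq_norm, Complex.normSq_apply, Complex.mul_re, Complex.conj_re,
    Complex.conj_im, Complex.sub_re, Complex.sub_im]
  ring

/-- Spectral representation of the MMD for the random-feature kernel
`k(x,y) = ∫ cos⟨ω, x−y⟩ dμ(ω)`: `MMD²_k(P,Q) = ∫ |φ_P(ω) − φ_Q(ω)|² dμ(ω)`,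
where `φ_P` is the characteristic function of `P`. In particular the squared
MMD is nonnegative, and it vanishes when `P = Q`. -/
theorem stmt_14 {d : ℕ} (μ : Measure (EuclideanSpace ℝ (Fin d))) [IsProbabilityMeasure μ]
    (k : EuclideanSpace ℝ (Fin d) → EuclideanSpace ℝ (Fin d) → ℝ)
    (hk : ∀ x y, k x y = ∫ ω, Real.cos ⟪ω, x - y⟫ ∂μ)
    (P Q : Measure (EuclideanSpace ℝ (Fin d)))
    [IsProbabilityMeasure P] [IsProbabilityMeasure Q]
    (φP φQ : EuclideanSpace ℝ (Fin d) → ℂ)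
    (hφP : ∀ ω, φP ω = ∫ x, Complex.exp (Complex.I * (⟪ω, x⟫ : ℝ)) ∂P)
    (hφQ : ∀ ω, φQ ω = ∫ x, Complex.exp (Complex.I * (⟪ω, x⟫ : ℝ)) ∂Q)
    (mmd2 : ℝ)
    (hmmd2 : mmd2 = (∫ x, ∫ x', k x x' ∂P ∂P) - 2 * (∫ x, ∫ y, k x y ∂Q ∂P)
      + ∫ y, ∫ y', k y y' ∂Q ∂Q) :
    mmd2 = ∫ ω, ‖φP ω - φQ ω‖ ^ 2 ∂μ ∧
      0 ≤ mmd2 ∧ (P = Q → mmd2 = 0) := by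
  obtain rfl : φP = charFun P :=
    funext fun ω => (hφP ω).trans (charFun_eq_integral_exp_I_mul_inner P ω).symm
  obtain rfl : φQ = charFun Q :=
    funext fun ω => (hφQ ω).trans (charFun_eq_integral_exp_I_mul_inner Q ω).symm
  have hspectral : mmd2 = ∫ ω, ‖charFun P ω - charFun Q ω‖ ^ 2 ∂μ := by
    have hPP := integrable_re_charFun_mul_conj μ P P
    have hPQ := (integrable_re_charFun_mul_conj μ P Q).const_mul 2
    simp only [hmmd2, hk, integral_integral_integral_cos_inner_sub,
      Complex.norm_sub_sq_eq_re_mul_conj]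
    rw [integral_add _ (integrable_re_charFun_mul_conj μ Q Q), integral_sub hPP hPQ,
      integral_const_mul]
    exact hPP.sub hPQ
  refine ⟨hspectral, hspectral ▸ integral_nonneg fun ω => by positivity, ?_⟩
  rintro rfl
  simp [hspectral]
end

section
/- Let μ be a probability measure on ℝ with M := ∫_ℝ ω² dμ(ω) < ∞, let h : ℝ^D → ℝ be continuously differentiable, and define k : ℝ^D × ℝ^D → ℝ by k(y1, y2) = ∫_ℝ cos(ω·(h(y1) − h(y2))) dμ(ω). Then for every x ∈ ℝ^D and every i ∈ {1, …, D}, the mixed second partial derivative ∂²k/∂y_{1i}∂y_{2i} exists at (y1, y2) = (x, x) and equals M·(∂h(x)/∂x_i)²; consequently, ∑_{i=1}^D ∂²k(y1, y2)/∂y_{1i}∂y_{2i} |_{(y1,y2)=(x,x)} = M·‖∇h(x)‖². -/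
open MeasureTheory Real Finset

/-! Writing `k y₁ y₂ = φ (h y₁ - h y₂)` with `φ t = ∫ cos (ω t) dμ`, differentiation under the
integral sign (dominated by `1 + ω²`, resp. `ω²`) gives `φ' t = -∫ ω sin (ω t) dμ` and
`φ'' 0 = -M`. By the chain rule, the mixed derivative of `k` at `(x, x)` in directions `v, w` is
`-φ'' 0 · Dh(x) v · Dh(x) w = M · Dh(x) v · Dh(x) w`; on the diagonal `v = w = eᵢ` these sum to
`M ‖∇h(x)‖²`. -/

section

variable {μ : Measure ℝ}

lemma hasDerivAt_integral_cos_mul [IsFiniteMeasure μ] (hμ : Integrable (fun ω => ω ^ 2) μ)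
    (t : ℝ) :
    HasDerivAt (fun t => ∫ ω, cos (ω * t) ∂μ) (-∫ ω, ω * sin (ω * t) ∂μ) t := by
  rw [← integral_neg]
  refine (hasDerivAt_integral_of_dominated_loc_of_deriv_le (F := fun t ω => cos (ω * t))
    (F' := fun t ω => -(ω * sin (ω * t))) (bound := fun ω => 1 + ω ^ 2)
    Filter.univ_mem ?_ ?_ ?_ ?_ ((integrable_const 1).add hμ) ?_).2
  · exact .of_forall fun s => (by fun_prop : Continuous _).aestronglyMeasurable
  · exact .of_bound (by fun_prop : Continuous _).aestronglyMeasurable 1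
      (.of_forall fun ω => by simpa using abs_cos_le_one (ω * t))
  · exact (by fun_prop : Continuous _).aestronglyMeasurable
  · refine .of_forall fun ω s _ => ?_
    calc ‖-(ω * sin (ω * s))‖ = |ω| * |sin (ω * s)| := by simp
      _ ≤ |ω| := mul_le_of_le_one_right (abs_nonneg ω) (abs_sin_le_one _)
      _ ≤ 1 + ω ^ 2 := by nlinarith [sq_abs ω]
  · exact .of_forall fun ω s _ =>
      ((hasDerivAt_id' s).const_mul ω).cos.congr_deriv (by ring)

lemma hasDerivAt_integral_mul_sin_mul (hμ : Integrable (fun ω => ω ^ 2) μ) (t : ℝ) :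
    HasDerivAt (fun t => ∫ ω, ω * sin (ω * t) ∂μ) (∫ ω, ω ^ 2 * cos (ω * t) ∂μ) t := by
  refine (hasDerivAt_integral_of_dominated_loc_of_deriv_le (F := fun t ω => ω * sin (ω * t))
    (F' := fun t ω => ω ^ 2 * cos (ω * t)) (bound := fun ω => ω ^ 2)
    Filter.univ_mem ?_ ?_ ?_ ?_ hμ ?_).2
  · exact .of_forall fun s => (by fun_prop : Continuous _).aestronglyMeasurable
  · refine (hμ.const_mul |t|).mono' (by fun_prop : Continuous _).aestronglyMeasurable
      (.of_forall fun ω => ?_)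
    calc ‖ω * sin (ω * t)‖ = |ω| * |sin (ω * t)| := by simp
      _ ≤ |ω| * |ω * t| := mul_le_mul_of_nonneg_left abs_sin_le_abs (abs_nonneg ω)
      _ = |t| * ω ^ 2 := by rw [abs_mul, ← mul_assoc, abs_mul_abs_self, mul_comm, sq]
  · exact (by fun_prop : Continuous _).aestronglyMeasurable
  · refine .of_forall fun ω s _ => ?_
    calc ‖ω ^ 2 * cos (ω * s)‖ = ω ^ 2 * |cos (ω * s)| := by simp
      _ ≤ ω ^ 2 := mul_le_of_le_one_right (sq_nonneg ω) (abs_cos_le_one _)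
  · exact .of_forall fun ω s _ =>
      (((hasDerivAt_id' s).const_mul ω).sin.const_mul ω).congr_deriv (by ring)

variable {E : Type*} [NormedAddCommGroup E] [NormedSpace ℝ E]
  {h : E → ℝ} {x : E}

lemma fderiv_integral_cos_mul_sub [IsFiniteMeasure μ] (hμ : Integrable (fun ω => ω ^ 2) μ)
    (hx : DifferentiableAt ℝ h x) (y : E) :
    fderiv ℝ (fun z => ∫ ω, cos (ω * (h y - h z)) ∂μ) x
      = (∫ ω, ω * sin (ω * (h y - h x)) ∂μ) • fderiv ℝ h x :=
  ((hasDerivAt_integral_cos_mul hμ _).comp_hasFDerivAt x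
    (hx.hasFDerivAt.const_sub (h y))).fderiv.trans (neg_smul_neg _ _)

lemma hasFDerivAt_integral_mul_sin_mul_sub (hμ : Integrable (fun ω => ω ^ 2) μ)
    (hx : DifferentiableAt ℝ h x) :
    HasFDerivAt (fun y => ∫ ω, ω * sin (ω * (h y - h x)) ∂μ)
      ((∫ ω, ω ^ 2 ∂μ) • fderiv ℝ h x) x := by
  have h0 := hasDerivAt_integral_mul_sin_mul hμ 0
  simp only [mul_zero, cos_zero, mul_one] at h0
  exact h0.comp_hasFDerivAt_of_eq x (hx.hasFDerivAt.sub_const (h x)) (sub_self _).symm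

theorem hasFDerivAt_fderiv_integral_cos_mul_sub [IsFiniteMeasure μ]
    (hμ : Integrable (fun ω => ω ^ 2) μ) (hx : DifferentiableAt ℝ h x) (v : E) :
    HasFDerivAt (fun y => fderiv ℝ (fun z => ∫ ω, cos (ω * (h y - h z)) ∂μ) x v)
      (((∫ ω, ω ^ 2 ∂μ) * fderiv ℝ h x v) • fderiv ℝ h x) x := by
  simp_rw [fderiv_integral_cos_mul_sub hμ hx, smul_apply, smul_eq_mul]
  refine ((hasFDerivAt_integral_mul_sin_mul_sub hμ hx).mul_const
    (fderiv ℝ h x v)).congr_fderiv ?_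
  rw [smul_smul, mul_comm]

end

lemma sum_fderiv_single_sq {ι : Type*} [Fintype ι] [DecidableEq ι]
    (f : EuclideanSpace ℝ ι → ℝ) (x : EuclideanSpace ℝ ι) :
    ∑ i, fderiv ℝ f x (EuclideanSpace.single i 1) ^ 2 = ‖gradient f x‖ ^ 2 := by
  simp_rw [← inner_gradient_left, EuclideanSpace.inner_single_right,
    EuclideanSpace.real_norm_sq_eq]
  simp

/-- Computation from the proof of the paper's Proposition 1 (one-dimensional
discriminator output): for the composed random-feature kernel
`k(y₁,y₂) = ∫ cos(ω(h(y₁) − h(y₂))) dμ(ω)` with `M = ∫ ω² dμ(ω) < ∞` and `h`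
continuously differentiable, the mixed second partials on the diagonal satisfy
`∂²k/∂y₁ᵢ∂y₂ᵢ(x,x) = M (∂h/∂xᵢ)²`, and their sum equals `M‖∇h(x)‖²`. -/
theorem stmt_16 {D : ℕ} (μ : Measure ℝ) [IsProbabilityMeasure μ]
    (hμ : Integrable (fun ω => ω ^ 2) μ)
    (M : ℝ) (hM : M = ∫ ω, ω ^ 2 ∂μ)
    (h : EuclideanSpace ℝ (Fin D) → ℝ) (hh : ContDiff ℝ 1 h)
    (k : EuclideanSpace ℝ (Fin D) → EuclideanSpace ℝ (Fin D) → ℝ)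
    (hk : ∀ y1 y2, k y1 y2 = ∫ ω, Real.cos (ω * (h y1 - h y2)) ∂μ)
    (x : EuclideanSpace ℝ (Fin D)) :
    (∀ i : Fin D, DifferentiableAt ℝ
        (fun y1 => fderiv ℝ (fun y2 => k y1 y2) x (EuclideanSpace.single i (1 : ℝ))) x) ∧
    (∀ i : Fin D,
      fderiv ℝ (fun y1 => fderiv ℝ (fun y2 => k y1 y2) x (EuclideanSpace.single i (1 : ℝ)))
          x (EuclideanSpace.single i (1 : ℝ))
        = M * (fderiv ℝ h x (EuclideanSpace.single i (1 : ℝ))) ^ 2) ∧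
    (∑ i : Fin D,
      fderiv ℝ (fun y1 => fderiv ℝ (fun y2 => k y1 y2) x (EuclideanSpace.single i (1 : ℝ)))
          x (EuclideanSpace.single i (1 : ℝ)))
      = M * ‖gradient h x‖ ^ 2 := by
  obtain rfl : k = fun y1 y2 => ∫ ω, cos (ω * (h y1 - h y2)) ∂μ := funext₂ hk
  subst hM
  have hmixed := fun i : Fin D => hasFDerivAt_fderiv_integral_cos_mul_sub hμ
    (hh.differentiable one_ne_zero x) (EuclideanSpace.single i (1 : ℝ))
  have hval : ∀ i : Fin D,
      fderiv ℝ (fun y1 => fderiv ℝ (fun y2 => ∫ ω, cos (ω * (h y1 - h y2)) ∂μ) x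
          (EuclideanSpace.single i (1 : ℝ))) x (EuclideanSpace.single i (1 : ℝ))
        = (∫ ω, ω ^ 2 ∂μ) * (fderiv ℝ h x (EuclideanSpace.single i (1 : ℝ))) ^ 2 := by
    intro i
    rw [(hmixed i).fderiv, smul_apply, smul_eq_mul]
    ring
  refine ⟨fun i => (hmixed i).differentiableAt, hval, ?_⟩
  rw [Finset.sum_congr rfl fun i _ => hval i, ← mul_sum, sum_fderiv_single_sq]
end
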